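/- arXiv:2112.10561 — 4 statements merged into one kernel-verified Lean document; each statement's English description precedes it below -/
import Mathlib

section
/- Let Q(x,y) = a x² + b x y + c y² be a real positive definite binary quadratic form (a > 0, b² − 4ac < 0). Then for every complex s with Re(s) > 1, the family (m,n) ↦ Q(m,n)^{−s} indexed by pairs of integers (m,n) ≠ (0,0) is summable; i.e. the classical Epstein zeta function Z₂(s,Q) = ∑_{(m,n)∈ℤ²∖{(0,0)}} Q(m,n)^{−s} converges absolutely for Re(s) > 1. -/
open Complex

/-! Completing the square, `4a·Q(x,y) = (2ax + by)² + (4ac − b²)y²`, and symmetrically in `x`,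
shows `Q(m,n) ≥ ε·max(|m|,|n|)²` for some `ε > 0`. Hence, with `σ = Re s`,
`|Q(m,n)^{-s}| ≤ ε^{-σ}‖(m,n)‖^{-2σ}`, and the lattice sum
`∑ ‖(m,n)‖^{-2σ}` converges since `2σ > 2`. -/

lemma disc_mul_sq_le_four_mul_binaryForm (a b c x y : ℝ) :
    (4 * a * c - b ^ 2) * y ^ 2 ≤ 4 * a * (a * x ^ 2 + b * x * y + c * y ^ 2) := by
  nlinarith [sq_nonneg (2 * a * x + b * y)]

lemma exists_pos_mul_max_sq_le_binaryForm {a b c : ℝ} (ha : 0 < a) (hd : b ^ 2 - 4 * a * c < 0) :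
    ∃ ε > 0, ∀ x y : ℝ, ε * max |x| |y| ^ 2 ≤ a * x ^ 2 + b * x * y + c * y ^ 2 := by
  have hc : 0 < c := by nlinarith [sq_nonneg b]
  set D := 4 * a * c - b ^ 2
  have hD : 0 < D := by linarith
  refine ⟨min (D / (4 * a)) (D / (4 * c)), by positivity, fun x y => ?_⟩
  have hy : D / (4 * a) * y ^ 2 ≤ a * x ^ 2 + b * x * y + c * y ^ 2 := by
    rw [div_mul_eq_mul_div, div_le_iff₀ (by positivity)]
    linarith [disc_mul_sq_le_four_mul_binaryForm a b c x y]
  have hx : D / (4 * c) * x ^ 2 ≤ a * x ^ 2 + b * x * y + c * y ^ 2 := by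
    rw [div_mul_eq_mul_div, div_le_iff₀ (by positivity)]
    linarith [disc_mul_sq_le_four_mul_binaryForm c b a y x]
  rcases le_total |x| |y| with h | h
  · rw [max_eq_right h, sq_abs]
    exact (mul_le_mul_of_nonneg_right (min_le_left _ _) (sq_nonneg y)).trans hy
  · rw [max_eq_left h, sq_abs]
    exact (mul_le_mul_of_nonneg_right (min_le_right _ _) (sq_nonneg x)).trans hx

lemma norm_int_prod_eq_max_abs (p : ℤ × ℤ) : ‖p‖ = max |(p.1 : ℝ)| |(p.2 : ℝ)| := by
  simp only [Prod.norm_def, Int.norm_eq_abs]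

lemma summable_int_prod_norm_rpow_neg {r : ℝ} (hr : 2 < r) :
    Summable fun p : ℤ × ℤ => ‖p‖ ^ (-r) := by
  refine ((finTwoArrowEquiv ℤ).symm.summable_iff.mpr
    (EisensteinSeries.summable_one_div_norm_rpow hr)).congr fun p => ?_
  simp [EisensteinSeries.norm_eq_max_natAbs, norm_int_prod_eq_max_abs, Nat.cast_natAbs]

lemma summable_ofReal_cpow_neg_of_mul_norm_sq_le {q : ℤ × ℤ → ℝ} {ε : ℝ} (hε : 0 < ε)
    (hq : ∀ p ≠ 0, ε * ‖p‖ ^ 2 ≤ q p) {s : ℂ} (hs : 1 < s.re) :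
    Summable fun p : {p : ℤ × ℤ // p ≠ 0} => (q p : ℂ) ^ (-s) := by
  have hmajorant :
      Summable fun p : {p : ℤ × ℤ // p ≠ 0} => ε ^ (-s.re) * ‖p.1‖ ^ (-(2 * s.re)) :=
    ((summable_int_prod_norm_rpow_neg (by linarith)).subtype _).mul_left _
  refine Summable.of_norm <|
    hmajorant.of_nonneg_of_le (fun _ => norm_nonneg _) fun ⟨p, hp⟩ => ?_
  have hlower : 0 < ε * ‖p‖ ^ 2 := by have := norm_pos_iff.mpr hp; positivity
  have hqp := hq p hp
  calc ‖(q p : ℂ) ^ (-s)‖ = q p ^ (-s.re) := by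
        rw [norm_cpow_eq_rpow_re_of_pos (hlower.trans_le hqp), neg_re]
    _ ≤ (ε * ‖p‖ ^ 2) ^ (-s.re) := Real.rpow_le_rpow_of_nonpos hlower hqp (by linarith)
    _ = ε ^ (-s.re) * ‖p‖ ^ (-(2 * s.re)) := by
        rw [Real.mul_rpow hε.le (by positivity), ← Real.rpow_natCast,
          ← Real.rpow_mul (norm_nonneg p)]
        norm_num

/-- Absolute convergence of the classical Epstein zeta function
`Z₂(s,Q) = ∑_{(m,n)≠(0,0)} Q(m,n)^{-s}` for `Re(s) > 1`. -/
theorem epstein_zeta_summable (a b c : ℝ) (ha : 0 < a) (hd : b ^ 2 - 4 * a * c < 0)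
    (s : ℂ) (hs : 1 < s.re) :
    Summable (fun p : {p : ℤ × ℤ // p ≠ (0, 0)} =>
      ((a * (p.1.1 : ℝ) ^ 2 + b * (p.1.1 : ℝ) * (p.1.2 : ℝ) + c * (p.1.2 : ℝ) ^ 2 : ℝ) : ℂ)
        ^ (-s)) := by
  obtain ⟨ε, hε, hQ⟩ := exists_pos_mul_max_sq_le_binaryForm ha hd
  refine summable_ofReal_cpow_neg_of_mul_norm_sq_le
    (q := fun p => a * (p.1 : ℝ) ^ 2 + b * p.1 * p.2 + c * (p.2 : ℝ) ^ 2) hε (fun p _ => ?_) hs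
  rw [norm_int_prod_eq_max_abs]
  exact hQ _ _
end

section
/- For complex numbers z and s with 0 < Re(z) < Re(s), the integral ∫₀^∞ x^{z−1} (1+x)^{−s} dx converges and equals Γ(z) Γ(s−z) / Γ(s). -/
/-!
Substituting `x = t / (1 - t)` maps `(0, 1)` onto `(0, ∞)` with `dx = (1 - t)⁻² dt` and
`1 + x = (1 - t)⁻¹`, which turns the integrand into `t^{z-1} (1 - t)^{s-z-1}`. The integral
thus becomes Euler's Beta integral `B(z, s - z) = Γ(z) Γ(s - z) / Γ(s)`.
-/

open Complex MeasureTheory Set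

lemma injOn_div_one_sub : InjOn (fun t : ℝ => t / (1 - t)) {1}ᶜ := by
  intro a ha b hb hab
  have ha' : 1 - a ≠ 0 := sub_ne_zero.2 (Ne.symm ha)
  have hb' : 1 - b ≠ 0 := sub_ne_zero.2 (Ne.symm hb)
  rw [div_eq_div_iff ha' hb'] at hab
  linarith

lemma image_div_one_sub_Ioo : (fun t : ℝ => t / (1 - t)) '' Ioo 0 1 = Ioi 0 := by
  ext x
  simp only [mem_image, mem_Ioo, mem_Ioi]
  constructor
  · rintro ⟨t, ⟨ht0, ht1⟩, rfl⟩
    exact div_pos ht0 (sub_pos.2 ht1)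
  · intro hx
    refine ⟨x / (1 + x), ⟨by positivity, (div_lt_one (by positivity)).2 (by linarith)⟩, ?_⟩
    field_simp
    ring

lemma hasDerivAt_div_one_sub {t : ℝ} (ht : t ≠ 1) :
    HasDerivAt (fun t : ℝ => t / (1 - t)) ((1 - t)⁻¹ ^ 2) t := by
  have ht' : 1 - t ≠ 0 := sub_ne_zero.2 (Ne.symm ht)
  refine ((hasDerivAt_id' t).fun_div ((hasDerivAt_id' t).const_sub 1) ht').congr_deriv ?_
  field_simp
  ring

section ChangeOfVariables

variable {E : Type*} [NormedAddCommGroup E] [NormedSpace ℝ E]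

lemma integrableOn_Ioi_iff_integrableOn_Ioo_div_one_sub (f : ℝ → E) :
    IntegrableOn f (Ioi 0) ↔
      IntegrableOn (fun t : ℝ => (1 - t)⁻¹ ^ 2 • f (t / (1 - t))) (Ioo 0 1) := by
  rw [← image_div_one_sub_Ioo, integrableOn_image_iff_integrableOn_abs_deriv_smul
    measurableSet_Ioo (fun _ ht => (hasDerivAt_div_one_sub ht.2.ne).hasDerivWithinAt)
    (injOn_div_one_sub.mono fun t ht => ht.2.ne)]
  simp only [abs_sq]

lemma integral_Ioi_eq_integral_Ioo_div_one_sub (f : ℝ → E) :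
    ∫ x in Ioi 0, f x = ∫ t in Ioo 0 1, (1 - t)⁻¹ ^ 2 • f (t / (1 - t)) := by
  rw [← image_div_one_sub_Ioo, integral_image_eq_integral_abs_deriv_smul
    measurableSet_Ioo (fun _ ht => (hasDerivAt_div_one_sub ht.2.ne).hasDerivWithinAt)
    (injOn_div_one_sub.mono fun t ht => ht.2.ne)]
  simp only [abs_sq]

end ChangeOfVariables

lemma smul_mellinBetaIntegrand_div_one_sub (z s : ℂ) {t : ℝ} (ht0 : 0 ≤ t) (ht1 : t < 1) :
    (1 - t)⁻¹ ^ 2 • (((t / (1 - t) : ℝ) : ℂ) ^ (z - 1) * ((1 + t / (1 - t) : ℝ) : ℂ) ^ (-s)) =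
      (t : ℂ) ^ (z - 1) * (1 - (t : ℂ)) ^ (s - z - 1) := by
  have hpos : 0 < 1 - t := sub_pos.2 ht1
  have hne : ((1 - t : ℝ) : ℂ) ≠ 0 := ofReal_ne_zero.2 hpos.ne'
  have harg : ((1 - t : ℝ) : ℂ).arg ≠ Real.pi := by
    rw [arg_ofReal_of_nonneg hpos.le]
    exact Real.pi_ne_zero.symm
  have hone_add : 1 + t / (1 - t) = (1 - t)⁻¹ := by
    field_simp
    ring
  have hx : ((t / (1 - t) : ℝ) : ℂ) ^ (z - 1) =
      (t : ℂ) ^ (z - 1) * ((1 - t : ℝ) : ℂ) ^ (-(z - 1)) := by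
    rw [div_eq_mul_inv, ofReal_mul, mul_cpow_ofReal_nonneg ht0 (inv_nonneg.2 hpos.le),
      ofReal_inv, inv_cpow _ _ harg, ← cpow_neg]
  have hy : (((1 - t)⁻¹ : ℝ) : ℂ) ^ (-s) = ((1 - t : ℝ) : ℂ) ^ s := by
    rw [ofReal_inv, inv_cpow _ _ harg, ← cpow_neg, neg_neg]
  have hjac : (((1 - t)⁻¹ ^ 2 : ℝ) : ℂ) = ((1 - t : ℝ) : ℂ) ^ (-2 : ℂ) := by
    rw [show (-2 : ℂ) = -((2 : ℕ) : ℂ) by norm_num, cpow_neg, cpow_natCast]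
    push_cast
    rw [inv_pow]
  have hexp : ((1 - t : ℝ) : ℂ) ^ (-(z - 1)) * ((1 - t : ℝ) : ℂ) ^ s *
      ((1 - t : ℝ) : ℂ) ^ (-2 : ℂ) = ((1 - t : ℝ) : ℂ) ^ (s - z - 1) := by
    rw [← cpow_add _ _ hne, ← cpow_add _ _ hne]
    ring_nf
  rw [hone_add, hx, hy, real_smul, hjac,
    show (1 : ℂ) - t = ((1 - t : ℝ) : ℂ) by push_cast; ring, ← hexp]
  ring

lemma Complex.betaIntegral_eq_setIntegral_Ioo (u v : ℂ) :
    betaIntegral u v = ∫ t in Ioo (0 : ℝ) 1, (t : ℂ) ^ (u - 1) * (1 - (t : ℂ)) ^ (v - 1) := by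
  rw [betaIntegral, intervalIntegral.integral_of_le zero_le_one, integral_Ioc_eq_integral_Ioo]

lemma Complex.integrableOn_betaIntegrand_Ioo {u v : ℂ} (hu : 0 < u.re) (hv : 0 < v.re) :
    IntegrableOn (fun t : ℝ => (t : ℂ) ^ (u - 1) * (1 - (t : ℂ)) ^ (v - 1)) (Ioo 0 1) :=
  (intervalIntegrable_iff_integrableOn_Ioo_of_le zero_le_one).1 (betaIntegral_convergent hu hv)

/-- The Beta integral in Mellin form: for `0 < Re z < Re s`,
`∫₀^∞ x^{z-1} (1+x)^{-s} dx = Γ(z) Γ(s-z) / Γ(s)`. -/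
theorem beta_mellin_integral (z s : ℂ) (hz : 0 < z.re) (hzs : z.re < s.re) :
    IntegrableOn (fun x : ℝ => (x : ℂ) ^ (z - 1) * ((1 + x : ℝ) : ℂ) ^ (-s)) (Ioi 0) ∧
      ∫ x : ℝ in Ioi 0, (x : ℂ) ^ (z - 1) * ((1 + x : ℝ) : ℂ) ^ (-s) =
        Complex.Gamma z * Complex.Gamma (s - z) / Complex.Gamma s := by
  have hsz : 0 < (s - z).re := by rw [sub_re]; linarith
  have hsubst : EqOn
      (fun t : ℝ => (1 - t)⁻¹ ^ 2 •
        (((t / (1 - t) : ℝ) : ℂ) ^ (z - 1) * ((1 + t / (1 - t) : ℝ) : ℂ) ^ (-s)))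
      (fun t : ℝ => (t : ℂ) ^ (z - 1) * (1 - (t : ℂ)) ^ (s - z - 1)) (Ioo 0 1) :=
    fun t ht => smul_mellinBetaIntegrand_div_one_sub z s ht.1.le ht.2
  refine ⟨(integrableOn_Ioi_iff_integrableOn_Ioo_div_one_sub _).2 ?_, ?_⟩
  · exact (integrableOn_congr_fun hsubst measurableSet_Ioo).2
      (integrableOn_betaIntegrand_Ioo hz hsz)
  · rw [integral_Ioi_eq_integral_Ioo_div_one_sub, setIntegral_congr_fun measurableSet_Ioo hsubst,
      ← betaIntegral_eq_setIntegral_Ioo, betaIntegral_eq_Gamma_mul_div _ _ hz hsz,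
      add_sub_cancel]
end

section
/- For every real α > 0 and every real β, the following theta reflection formula holds: 1/2 + ∑_{n≥1} e^{−α n²} cos(β n) = (1/2) √(π/α) · ∑_{n∈ℤ} e^{−(π n + β/2)²/α}. -/
/-!
Poisson summation for the Gaussian with a purely imaginary shift (Jacobi's transformation
`Complex.tsum_exp_neg_quadratic` at `a = α/π`, `b = -iβ/(2π)`) turns
`∑_{n∈ℤ} e^{-αn² - iβn}` into `√(π/α) ∑_{n∈ℤ} e^{-(πn + β/2)²/α}`. Taking real parts gives the
cosine sum over `ℤ`, and since its terms are even in `n` it equals `1 + 2 ∑_{n≥1} e^{-αn²} cos(βn)`.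
-/

open Real Complex

lemma summable_cexp_neg_mul_int_sq_add_mul_I {a : ℝ} (ha : 0 < a) (b : ℝ) :
    Summable fun n : ℤ ↦ cexp ((-a * n ^ 2 : ℝ) + (b * n : ℝ) * I) := by
  have hτ : 0 < (I * a / π).im := by simp; positivity
  convert (summable_jacobiTheta₂_term_iff (b / (2 * π)) (I * a / π)).mpr hτ using 2 with n
  rw [jacobiTheta₂_term]
  congr 1
  push_cast
  field_simp
  ring_nf
  rw [I_sq]
  ring

lemma one_div_ofReal_cpow_half {x : ℝ} (hx : 0 ≤ x) : 1 / (x : ℂ) ^ (1 / 2 : ℂ) = (√x⁻¹ : ℂ) := by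
  rw [Real.sqrt_inv, Real.sqrt_eq_rpow, ofReal_inv, ofReal_cpow hx, one_div (_ ^ _)]
  norm_num

theorem hasSum_exp_neg_mul_int_sq_mul_cos {a : ℝ} (ha : 0 < a) (b : ℝ) :
    HasSum (fun n : ℤ ↦ rexp (-a * n ^ 2) * Real.cos (b * n))
      (√(π / a) * ∑' n : ℤ, rexp (-(π * n + b / 2) ^ 2 / a)) := by
  have hπ : (π : ℂ) ≠ 0 := ofReal_ne_zero.mpr pi_ne_zero
  have ha' : (a : ℂ) ≠ 0 := ofReal_ne_zero.mpr ha.ne'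
  have hjacobi := Complex.tsum_exp_neg_quadratic (a := ((a / π : ℝ) : ℂ)) (by simp; positivity)
    (-I * b / (2 * π))
  have hL : ∀ n : ℤ, -π * ((a / π : ℝ) : ℂ) * n ^ 2 + 2 * π * (-I * b / (2 * π)) * n =
      (-a * n ^ 2 : ℝ) + (-b * n : ℝ) * I := by
    intro n; push_cast; field_simp
  have hI : I * (-I * b / (2 * π)) = b / (2 * π) := by
    ring_nf; rw [I_sq]; ring
  have hR : ∀ n : ℤ, -π / ((a / π : ℝ) : ℂ) * (n + I * (-I * b / (2 * π))) ^ 2 =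
      ((-(π * n + b / 2) ^ 2 / a : ℝ) : ℂ) := by
    intro n; rw [hI]; push_cast; field_simp
  have hC : 1 / ((a / π : ℝ) : ℂ) ^ (1 / 2 : ℂ) = (√(π / a) : ℂ) := by
    rw [one_div_ofReal_cpow_half (by positivity), inv_div]
  simp_rw [hL, hR, hC, ← ofReal_exp, ← ofReal_tsum, ← ofReal_mul] at hjacobi
  have hre := Complex.hasSum_re (summable_cexp_neg_mul_int_sq_add_mul_I ha (-b)).hasSum
  rw [hjacobi, ofReal_re] at hre
  simpa only [exp_re, add_re, add_im, ofReal_re, ofReal_im, mul_re, mul_im, I_re, I_im, mul_zero,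
    mul_one, sub_zero, zero_add, add_zero, neg_mul, Real.cos_neg] using hre

lemma tsum_int_eq_zero_add_two_nsmul_tsum_succ {G : Type*} [AddCommGroup G] [UniformSpace G]
    [IsUniformAddGroup G] [CompleteSpace G] [T2Space G] {f : ℤ → G} (hf : f.Even)
    (hs : Summable f) : ∑' n, f n = f 0 + 2 • ∑' n : ℕ, f (n + 1) := by
  rw [tsum_int_eq_zero_add_two_mul_tsum_pnat hf hs, tsum_pnat_eq_tsum_succ (f := fun n : ℕ ↦ f n)]
  push_cast
  rfl

/-- The shifted theta reflection formula:
`1/2 + ∑_{n≥1} e^{-α n²} cos(β n) = (1/2)√(π/α) ∑_{n∈ℤ} e^{-(π n + β/2)²/α}`. -/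
theorem theta_reflection (α β : ℝ) (hα : 0 < α) :
    1 / 2 + ∑' n : ℕ, Real.exp (-α * ((n : ℝ) + 1) ^ 2) * Real.cos (β * ((n : ℝ) + 1)) =
      1 / 2 * Real.sqrt (π / α) *
        ∑' n : ℤ, Real.exp (-(π * (n : ℝ) + β / 2) ^ 2 / α) := by
  have hsum := hasSum_exp_neg_mul_int_sq_mul_cos hα β
  have heven : Function.Even fun n : ℤ ↦ rexp (-α * n ^ 2) * Real.cos (β * n) := fun n ↦ by
    simp only [Int.cast_neg, neg_sq, mul_neg, Real.cos_neg]
  have hsplit := tsum_int_eq_zero_add_two_nsmul_tsum_succ heven hsum.summable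
  rw [hsum.tsum_eq] at hsplit
  push_cast at hsplit
  simp only [ne_eq, OfNat.ofNat_ne_zero, not_false_eq_true, zero_pow, mul_zero, Real.exp_zero,
    Real.cos_zero, mul_one, nsmul_eq_mul, Nat.cast_ofNat] at hsplit
  linarith
end

section
/- Let k be a positive integer and let s be a complex number satisfying 1 − 2·2^{−s} + 2^{2k − 2s} = 0. Then Re(s) = k. -/
/-!
With `z = 2^(k - s)` the equation reads `z² - 2^(1-k) z + 1 = 0`, a real quadratic whose
discriminant is negative once `k ≥ 1`. Its roots are therefore a pair of complex conjugates with
product `1`, so `2^(k - Re s) = ‖z‖ = 1`.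
-/

open Complex

theorem mul_normSq_eq_of_quadratic_eq_zero {a b c : ℝ} (hdisc : b ^ 2 < 4 * a * c) {w : ℂ}
    (hw : a * w ^ 2 + b * w + c = 0) : a * normSq w = c := by
  have hre : a * (w.re ^ 2 - w.im ^ 2) + b * w.re + c = 0 := by
    simpa [sq] using congrArg re hw
  have him : a * (w.re * w.im + w.im * w.re) + b * w.im = 0 := by
    simpa [sq] using congrArg im hw
  have hnonreal : w.im ≠ 0 := by
    intro h0
    have hcompleted : (2 * a * w.re + b) ^ 2 = b ^ 2 - 4 * a * c := by
      rw [h0] at hre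
      linear_combination 4 * a * hre
    nlinarith [sq_nonneg (2 * a * w.re + b)]
  have hvieta : 2 * a * w.re + b = 0 := by
    refine (mul_eq_zero.mp ?_).resolve_right hnonreal
    linear_combination him
  rw [normSq_apply]
  linear_combination -hre + w.re * hvieta

/-- All zeros of `1 - 2·2^{-s} + 2^{2k-2s}` lie on the line `Re(s) = k`. -/
theorem eisenstein_factor_zeros (k : ℕ) (hk : 0 < k) (s : ℂ)
    (hs : 1 - 2 * (2 : ℂ) ^ (-s) + (2 : ℂ) ^ (2 * (k : ℂ) - 2 * s) = 0) :
    s.re = k := by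
  set z : ℂ := (2 : ℂ) ^ ((k : ℂ) - s)
  have hsq : (2 : ℂ) ^ (2 * (k : ℂ) - 2 * s) = z ^ 2 := by
    rw [← cpow_nat_mul]; push_cast; ring_nf
  have hlin : (2 : ℂ) ^ (-s) = z / 2 ^ k := by
    rw [eq_div_iff (by simp), ← cpow_natCast, ← cpow_add _ _ two_ne_zero, neg_add_eq_sub]
  have hquad : (1 : ℝ) * z ^ 2 + (-(2 / 2 ^ k) : ℝ) * z + (1 : ℝ) = 0 := by
    push_cast; rw [← hs, hsq, hlin]; ring
  have hdisc : (-(2 / 2 ^ k) : ℝ) ^ 2 < 4 * 1 * 1 := by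
    have htwo_le : (2 : ℝ) ≤ 2 ^ k := by simpa using pow_le_pow_right₀ one_le_two hk
    rw [neg_sq, div_pow, div_lt_iff₀ (by positivity)]
    nlinarith
  have hunit : ‖z‖ = 1 := by
    have := mul_normSq_eq_of_quadratic_eq_zero hdisc hquad
    rw [one_mul, normSq_eq_norm_sq] at this
    exact (pow_eq_one_iff_of_nonneg (norm_nonneg z) two_ne_zero).mp this
  have hnorm_z : ‖z‖ = (2 : ℝ) ^ ((k : ℂ) - s).re := by
    simpa using norm_natCast_cpow_of_pos two_pos ((k : ℂ) - s)
  rw [hunit, ← Real.rpow_zero 2, Real.rpow_right_inj two_pos (by norm_num)] at hnorm_z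
  simp only [sub_re, natCast_re] at hnorm_z
  linarith
end
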